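/- Let $k$ be a field of characteristic $\neq 2$ and let $q$ be an anisotropic quadratic form over $k$ that represents $1$, with $q \simeq \langle 1 \rangle \perp q'$. Then the quadratic form $\varphi = \langle x_2 + 1, -x_2 - x_1 \rangle \perp \langle 1, -x_2 \rangle \otimes q' \perp x_1 \cdot (\langle\langle x_2 \rangle\rangle \otimes q)$ is anisotropic over $k(x_1, x_2)$. -/

import Mathlib

/-!
Embed `k(x₁, x₂)` into `k(x₂)(x₁)`. There `φ = a ⊥ x₁ b` with `a, b` having coefficients in
`k(x₂)[x₁]`, so by Springer's theorem in `x₁` it suffices that the residue forms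
`a(0) = ⟨x₂ + 1, -x₂⟩ ⊥ ⟨1, -x₂⟩ ⊗ q'` and `b(0) = ⟨⟨x₂⟩⟩ ⊗ q` are anisotropic over `k(x₂)`.
Both are again of the shape `a' ⊥ x₂ b'`, with residue forms `q, -q` and `q, q` over `k`, so
Springer's theorem in `x₂` finishes the proof.

The needed half of Springer's theorem is proved by descent: if `∑ aᵢ wᵢ² + X ∑ bⱼ vⱼ² = 0` in
`F[X]`, reducing mod `X` forces `X ∣ wᵢ`, dividing by `X` and reducing again forces `X ∣ vⱼ`, and
the quotients are again a solution; so every `wᵢ, vⱼ` is divisible by all powers of `X`.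
-/

/-- A diagonal quadratic form (given by its diagonal entries `d`) is anisotropic. -/
def Anisotropic {F : Type*} [Field F] {ι : Type*} [Fintype ι] (d : ι → F) : Prop :=
  ∀ w : ι → F, ∑ i, d i * w i ^ 2 = 0 → w = 0

noncomputable section

/-- The field `k(x₁, x₂)`. -/
abbrev K2 (k : Type*) [Field k] := FractionRing (MvPolynomial (Fin 2) k)

/-- The variable `xᵢ` in `k(x₁, x₂)`. -/
def xv {k : Type*} [Field k] (i : Fin 2) : K2 k :=
  algebraMap (MvPolynomial (Fin 2) k) (K2 k) (MvPolynomial.X i)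

/-- The inclusion of constants `k → k(x₁, x₂)`. -/
def cst {k : Type*} [Field k] (a : k) : K2 k :=
  algebraMap (MvPolynomial (Fin 2) k) (K2 k) (MvPolynomial.C a)

open Polynomial

section General

variable {F : Type*} [Field F] {ι κ : Type*} [Fintype ι] [Fintype κ]

theorem Anisotropic.comp_equiv {d : κ → F} (h : Anisotropic d) (e : ι ≃ κ) :
    Anisotropic (d ∘ e) := by
  intro w hw
  have hw' : w ∘ e.symm = 0 := h _ <| by
    rw [← hw, ← e.sum_comp]
    simp
  ext i
  simpa using congrFun hw' (e i)

theorem Anisotropic.neg {d : ι → F} (h : Anisotropic d) : Anisotropic fun i => -d i := by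
  intro w hw
  exact h w (by simpa using hw)

theorem Anisotropic.of_map {L : Type*} [Field L] (f : F →+* L) {d : ι → F}
    (h : Anisotropic (f ∘ d)) : Anisotropic d := by
  intro w hw
  have hfw : f ∘ w = 0 := h _ <| by simpa [map_sum] using congrArg f hw
  ext i
  simpa using congrFun hfw i

theorem Anisotropic.of_isFractionRing {R : Type*} [CommRing R] [IsDomain R] [Algebra R F]
    [IsFractionRing R F] {d : ι → R} (h : ∀ c : ι → R, ∑ i, d i * c i ^ 2 = 0 → c = 0) :
    Anisotropic (algebraMap R F ∘ d) := by
  intro w hw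
  obtain ⟨b, hb⟩ := IsLocalization.exist_integer_multiples_of_finite (nonZeroDivisors R) w
  choose c hc using hb
  have hb0 : algebraMap R F b ≠ 0 := IsFractionRing.to_map_ne_zero_of_mem_nonZeroDivisors b.2
  have hc0 : c = 0 := h c <| IsFractionRing.injective R F <| by
    rw [map_zero, map_sum, ← mul_zero (algebraMap R F b ^ 2), ← hw, Finset.mul_sum]
    refine Finset.sum_congr rfl fun i _ => ?_
    rw [map_mul, map_pow, hc i, Algebra.smul_def]
    simp only [Function.comp_apply]
    ring
  ext i
  have := hc i
  rw [hc0, Pi.zero_apply, map_zero, Algebra.smul_def] at this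
  simpa [hb0] using this.symm

end General

def sumProdEquivProdFinSucc (α : Type*) (n : ℕ) : α ⊕ α × Fin n ≃ α × Fin (n + 1) where
  toFun := Sum.elim (fun i => (i, 0)) fun p => (p.1, p.2.succ)
  invFun p := Fin.cases (Sum.inl p.1) (fun j => Sum.inr (p.1, j)) p.2
  left_inv := by rintro (i | ⟨i, j⟩) <;> rfl
  right_inv := by rintro ⟨i, j⟩; cases j using Fin.cases <;> rfl

section Springer

variable {F : Type*} [Field F] {ι κ : Type*} [Fintype ι] [Fintype κ]
  {a : ι → F[X]} {b : κ → F[X]}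

theorem X_dvd_of_X_dvd_sum (ha : Anisotropic fun i => (a i).eval 0) {w : ι → F[X]}
    (h : X ∣ ∑ i, a i * w i ^ 2) (i : ι) : X ∣ w i := by
  simp only [X_dvd_iff, coeff_zero_eq_eval_zero, eval_finsetSum, eval_mul, eval_pow] at h ⊢
  exact congrFun (ha _ h) i

theorem exists_eq_X_mul_of_residues (ha : Anisotropic fun i => (a i).eval 0)
    (hb : Anisotropic fun j => (b j).eval 0) {w : ι → F[X]} {v : κ → F[X]}
    (h : ∑ i, a i * w i ^ 2 + X * ∑ j, b j * v j ^ 2 = 0) :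
    ∃ (u : ι → F[X]) (t : κ → F[X]), (∀ i, w i = X * u i) ∧ (∀ j, v j = X * t j) ∧
      ∑ i, a i * u i ^ 2 + X * ∑ j, b j * t j ^ 2 = 0 := by
  have hX : (X : F[X]) ≠ 0 := X_ne_zero
  choose u hu using X_dvd_of_X_dvd_sum ha
    (by rw [eq_neg_of_add_eq_zero_left h]; exact dvd_neg.mpr (dvd_mul_right _ _))
  have hw : ∑ i, a i * w i ^ 2 = X ^ 2 * ∑ i, a i * u i ^ 2 := by
    simp only [hu, Finset.mul_sum]
    exact Finset.sum_congr rfl fun i _ => by ring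
  have hv : ∑ j, b j * v j ^ 2 + X * ∑ i, a i * u i ^ 2 = 0 :=
    mul_left_cancel₀ hX (by linear_combination h - hw)
  choose t ht using X_dvd_of_X_dvd_sum hb
    (by rw [eq_neg_of_add_eq_zero_left hv]; exact dvd_neg.mpr (dvd_mul_right _ _))
  have hv' : ∑ j, b j * v j ^ 2 = X ^ 2 * ∑ j, b j * t j ^ 2 := by
    simp only [ht, Finset.mul_sum]
    exact Finset.sum_congr rfl fun j _ => by ring
  refine ⟨u, t, hu, ht, mul_left_cancel₀ (pow_ne_zero 2 hX) ?_⟩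
  linear_combination X * hv - X * hv'

theorem X_pow_dvd_of_residues (ha : Anisotropic fun i => (a i).eval 0)
    (hb : Anisotropic fun j => (b j).eval 0) (m : ℕ) {w : ι → F[X]} {v : κ → F[X]}
    (h : ∑ i, a i * w i ^ 2 + X * ∑ j, b j * v j ^ 2 = 0) :
    (∀ i, X ^ m ∣ w i) ∧ ∀ j, X ^ m ∣ v j := by
  induction m generalizing w v with
  | zero => simp
  | succ m ih =>
    obtain ⟨u, t, hu, ht, h'⟩ := exists_eq_X_mul_of_residues ha hb h
    refine ⟨fun i => ?_, fun j => ?_⟩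
    · rw [hu, pow_succ']; exact mul_dvd_mul_left X ((ih h').1 i)
    · rw [ht, pow_succ']; exact mul_dvd_mul_left X ((ih h').2 j)

theorem eq_zero_of_X_pow_dvd_forall {p : F[X]} (h : ∀ m, (X : F[X]) ^ m ∣ p) : p = 0 :=
  eq_zero_of_dvd_of_natDegree_lt (h (p.natDegree + 1)) (by simp)

theorem anisotropic_sumElim_of_residues {K : Type*} [Field K] [Algebra F[X] K]
    [IsFractionRing F[X] K] (ha : Anisotropic fun i => (a i).eval 0)
    (hb : Anisotropic fun j => (b j).eval 0) :
    Anisotropic (Sum.elim (algebraMap F[X] K ∘ a) (algebraMap F[X] K ∘ fun j => X * b j)) := by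
  rw [← Sum.comp_elim]
  refine Anisotropic.of_isFractionRing fun c hc => ?_
  have h : ∑ i, a i * c (.inl i) ^ 2 + X * ∑ j, b j * c (.inr j) ^ 2 = 0 := by
    simpa [Fintype.sum_sum_type, Finset.mul_sum, mul_assoc] using hc
  funext x
  rcases x with i | j
  · exact eq_zero_of_X_pow_dvd_forall fun m => (X_pow_dvd_of_residues ha hb m h).1 i
  · exact eq_zero_of_X_pow_dvd_forall fun m => (X_pow_dvd_of_residues ha hb m h).2 j

end Springer

section Residues

variable {k : Type*} [Field k] {K : Type*} [Field K] [Algebra k[X] K] [IsFractionRing k[X] K]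

theorem anisotropic_finTwo_prod_of_residues {ι : Type*} [Fintype ι] {a b : ι → k[X]}
    (ha : Anisotropic fun i => (a i).eval 0) (hb : Anisotropic fun i => (b i).eval 0) :
    Anisotropic fun p : Fin 2 × ι => algebraMap k[X] K (![a p.2, X * b p.2] p.1) := by
  convert (anisotropic_sumElim_of_residues (K := K) ha hb).comp_equiv
    ((finTwoEquiv.prodCongr (Equiv.refl ι)).trans (Equiv.boolProdEquivSum ι)) using 1
  funext ⟨i, j⟩
  fin_cases i <;> simp [finTwoEquiv]

theorem anisotropic_pfister_tensor {ι : Type*} [Fintype ι] {d : ι → k} (hd : Anisotropic d) :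
    Anisotropic fun p : Fin 2 × ι =>
      ![1, algebraMap k[X] K X] p.1 * algebraMap k[X] K (C (d p.2)) := by
  convert anisotropic_finTwo_prod_of_residues (K := K) (a := C ∘ d) (b := C ∘ d)
    (by simpa using hd) (by simpa using hd) using 1
  funext ⟨i, j⟩
  fin_cases i <;> simp [mul_comm (algebraMap k[X] K X)]

theorem anisotropic_firstResidue {n : ℕ} {q' : Fin n → k}
    (hq : Anisotropic (Fin.cons 1 q' : Fin (n + 1) → k)) :
    Anisotropic (Sum.elim ![algebraMap k[X] K X + 1, -algebraMap k[X] K X] fun p : Fin 2 × Fin n =>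
      ![1, -algebraMap k[X] K X] p.1 * algebraMap k[X] K (C (q' p.2))) := by
  have ha : Anisotropic fun i => ((Fin.cons (X + 1) (C ∘ q') : Fin (n + 1) → k[X]) i).eval 0 := by
    convert hq using 1
    funext i
    cases i using Fin.cases <;> simp
  have hb : Anisotropic fun i => (-C ((Fin.cons 1 q' : Fin (n + 1) → k) i)).eval 0 := by
    simpa using hq.neg
  convert (anisotropic_finTwo_prod_of_residues (K := K) ha hb).comp_equiv
    (sumProdEquivProdFinSucc (Fin 2) n) using 1
  funext x
  rcases x with i | ⟨i, j⟩ <;> fin_cases i <;>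
    simp [sumProdEquivProdFinSucc, mul_comm (algebraMap k[X] K X)]

end Residues

section Phi

variable {k : Type*} [One k] {E E' : Type*} [CommRing E] [CommRing E'] {n : ℕ}

def phiForm (c : k → E) (x₁ x₂ : E) (q' : Fin n → k) :
    Fin 2 ⊕ (Fin 2 × Fin n ⊕ Fin 2 × Fin (n + 1)) → E :=
  Sum.elim ![x₂ + 1, -x₂ - x₁]
    (Sum.elim (fun p => ![1, -x₂] p.1 * c (q' p.2))
      fun p => x₁ * ![1, x₂] p.1 * c ((Fin.cons 1 q' : Fin (n + 1) → k) p.2))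

theorem comp_phiForm (f : E →+* E') (c : k → E) (x₁ x₂ : E) (q' : Fin n → k) :
    f ∘ phiForm c x₁ x₂ q' = phiForm (f ∘ c) (f x₁) (f x₂) q' := by
  funext x
  rcases x with i | ⟨i, j⟩ | ⟨i, j⟩ <;> fin_cases i <;> simp [phiForm]

end Phi

theorem anisotropic_phiForm_iterated {k : Type*} [Field k] {K : Type*} [Field K] [Algebra k[X] K]
    [IsFractionRing k[X] K] {L : Type*} [Field L] [Algebra K[X] L] [IsFractionRing K[X] L]
    {n : ℕ} {q' : Fin n → k} (hq : Anisotropic (Fin.cons 1 q' : Fin (n + 1) → k)) :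
    Anisotropic (phiForm (algebraMap K[X] L ∘ C ∘ algebraMap k[X] K ∘ C) (algebraMap K[X] L X)
      (algebraMap K[X] L (C (algebraMap k[X] K X))) q') := by
  let y := algebraMap k[X] K X
  let a : Fin 2 ⊕ Fin 2 × Fin n → K[X] := Sum.elim ![C (y + 1), C (-y) - X]
    fun p => C (![1, -y] p.1 * algebraMap k[X] K (C (q' p.2)))
  let b : Fin 2 × Fin (n + 1) → K[X] := fun p =>
    C (![1, y] p.1 * algebraMap k[X] K (C ((Fin.cons 1 q' : Fin (n + 1) → k) p.2)))
  have ha : Anisotropic fun i => (a i).eval 0 := by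
    convert anisotropic_firstResidue (K := K) hq using 1
    funext x
    rcases x with i | ⟨i, j⟩ <;> fin_cases i <;> simp [a, y]
  have hb : Anisotropic fun p => (b p).eval 0 := by
    simpa [b, y] using anisotropic_pfister_tensor (K := K) hq
  convert (anisotropic_sumElim_of_residues (K := L) ha hb).comp_equiv
    (Equiv.sumAssoc _ _ _).symm using 1
  funext x
  rcases x with i | ⟨i, j⟩ | ⟨i, j⟩ <;> fin_cases i <;> simp [phiForm, a, b, y] <;> ring

section Embedding

variable (k : Type*) [Field k]

def toIteratedPoly : MvPolynomial (Fin 2) k →+* (FractionRing k[X])[X] :=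
  (mapRingHom ((algebraMap k[X] (FractionRing k[X])).comp
    (MvPolynomial.uniqueAlgEquiv k (Fin 1)).toRingHom)).comp
    (MvPolynomial.finSuccEquiv k 1).toRingHom

theorem toIteratedPoly_injective : Function.Injective (toIteratedPoly k) := by
  refine (map_injective _ ?_).comp (MvPolynomial.finSuccEquiv k 1).injective
  exact (IsFractionRing.injective k[X] (FractionRing k[X])).comp
    (MvPolynomial.uniqueAlgEquiv k (Fin 1)).injective

/-- `k(x₁, x₂) ↪ k(x₂)(x₁)`. -/
def toIteratedField : K2 k →+* FractionRing (FractionRing k[X])[X] :=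
  IsFractionRing.lift (g := (algebraMap _ _).comp (toIteratedPoly k))
    ((IsFractionRing.injective _ _).comp (toIteratedPoly_injective k))

variable {k}

theorem toIteratedField_xv_zero :
    toIteratedField k (xv 0) = algebraMap (FractionRing k[X])[X] _ X := by
  simp [toIteratedField, xv, toIteratedPoly, MvPolynomial.finSuccEquiv_X_zero]

theorem toIteratedField_xv_one :
    toIteratedField k (xv 1) = algebraMap (FractionRing k[X])[X] _ (C (algebraMap k[X] _ X)) := by
  have : (MvPolynomial.X 1 : MvPolynomial (Fin 2) k) = MvPolynomial.X (Fin.succ 0) := rfl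
  simp [toIteratedField, xv, toIteratedPoly, this, MvPolynomial.finSuccEquiv_X_succ]

theorem toIteratedField_comp_cst :
    toIteratedField k ∘ cst = algebraMap (FractionRing k[X])[X] _ ∘ C ∘
      algebraMap k[X] (FractionRing k[X]) ∘ C := by
  funext a
  simp [toIteratedField, cst, toIteratedPoly, MvPolynomial.finSuccEquiv_apply]

end Embedding

theorem phi_anisotropic_over_k_x1_x2_general
    {k : Type*} [Field k] {n : ℕ} (q' : Fin n → k)
    (hq : Anisotropic (Fin.cons 1 q' : Fin (n + 1) → k)) :
    Anisotropic (Sum.elim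
      (![xv (k := k) 1 + 1, -xv 1 - xv 0])
      (Sum.elim
        (fun p : Fin 2 × Fin n => ![(1 : K2 k), -xv 1] p.1 * cst (q' p.2))
        (fun p : Fin 2 × Fin (n + 1) =>
          xv 0 * ![(1 : K2 k), xv 1] p.1 * cst ((Fin.cons 1 q' : Fin (n + 1) → k) p.2)))) := by
  refine Anisotropic.of_map (toIteratedField k)
    (?_ : Anisotropic (toIteratedField k ∘ phiForm cst (xv 0) (xv 1) q'))
  rw [comp_phiForm, toIteratedField_comp_cst, toIteratedField_xv_zero, toIteratedField_xv_one]
  exact anisotropic_phiForm_iterated hq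

/-- let `q ≃ ⟨1⟩ ⊥ q'` be anisotropic over `k` (char ≠ 2), representing 1.
Then `φ = ⟨x₂ + 1, -x₂ - x₁⟩ ⊥ ⟨1, -x₂⟩ ⊗ q' ⊥ x₁ · (⟨⟨x₂⟩⟩ ⊗ q)` is anisotropic over
`k(x₁, x₂)`. -/
theorem phi_anisotropic_over_k_x1_x2
    {k : Type*} [Field k] (hk : (2 : k) ≠ 0) {n : ℕ} (q' : Fin n → k)
    (hq : Anisotropic (Fin.cons 1 q' : Fin (n + 1) → k)) :
    Anisotropic (Sum.elim
      (![xv (k := k) 1 + 1, -xv 1 - xv 0])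
      (Sum.elim
        (fun p : Fin 2 × Fin n => ![(1 : K2 k), -xv 1] p.1 * cst (q' p.2))
        (fun p : Fin 2 × Fin (n + 1) =>
          xv 0 * ![(1 : K2 k), xv 1] p.1 * cst ((Fin.cons 1 q' : Fin (n + 1) → k) p.2)))) :=
  phi_anisotropic_over_k_x1_x2_general q' hq

end
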